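/- In the logic CoPC, for every natural number n ≥ 1 the formula ¬^(2n+1) p → ¬p is a theorem, where ¬^(m) denotes m nested negations; i.e., the sequent ⇒ ¬^(2n+1) p → ¬p is derivable in G3-CoPC. -/
import Mathlib


inductive Fml where
  | var : Nat → Fml
  | top : Fml
  | and : Fml → Fml → Fml
  | or  : Fml → Fml → Fml
  | imp : Fml → Fml → Fml
  | neg : Fml → Fml
deriving DecidableEq

/-- Names for the four possible negation rules. -/
inductive NegRule where
  | n | nef | copc | an
deriving DecidableEq

/-- `Der R Γ φ k`: the sequent `Γ ⇒ φ` is derivable with height at most `k`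
in the G3 calculus whose negation rules are those satisfying `R`.
Axioms are available at every height; each rule adds one to the height. -/
inductive Der (R : NegRule → Prop) : Multiset Fml → Fml → Nat → Prop where
  | ax (Γ : Multiset Fml) (p k) : Der R (Fml.var p ::ₘ Γ) (Fml.var p) k
  | top (Γ : Multiset Fml) (k) : Der R Γ Fml.top k
  | andR {Γ α β k} : Der R Γ α k → Der R Γ β k → Der R Γ (Fml.and α β) (k+1)
  | andL {Γ α β φ k} : Der R (α ::ₘ β ::ₘ Γ) φ k → Der R (Fml.and α β ::ₘ Γ) φ (k+1)
  | orR1 {Γ α β k} : Der R Γ α k → Der R Γ (Fml.or α β) (k+1)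
  | orR2 {Γ α β k} : Der R Γ β k → Der R Γ (Fml.or α β) (k+1)
  | orL {Γ α β φ k} : Der R (α ::ₘ Γ) φ k → Der R (β ::ₘ Γ) φ k →
      Der R (Fml.or α β ::ₘ Γ) φ (k+1)
  | impR {Γ α β k} : Der R (α ::ₘ Γ) β k → Der R Γ (Fml.imp α β) (k+1)
  | impL {Γ α β φ k} : Der R (Fml.imp α β ::ₘ Γ) α k → Der R (β ::ₘ Γ) φ k →
      Der R (Fml.imp α β ::ₘ Γ) φ (k+1)
  | nrule {Γ α β k} : R NegRule.n → Der R (β ::ₘ Fml.neg α ::ₘ Γ) α k →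
      Der R (α ::ₘ Fml.neg α ::ₘ Γ) β k → Der R (Fml.neg α ::ₘ Γ) (Fml.neg β) (k+1)
  | nef {Γ α β k} : R NegRule.nef → Der R (Fml.neg α ::ₘ Γ) α k →
      Der R (Fml.neg α ::ₘ Γ) (Fml.neg β) (k+1)
  | copc {Γ α β k} : R NegRule.copc → Der R (β ::ₘ Fml.neg α ::ₘ Γ) α k →
      Der R (Fml.neg α ::ₘ Γ) (Fml.neg β) (k+1)
  | an {Γ α k} : R NegRule.an → Der R (α ::ₘ Γ) (Fml.neg α) k → Der R Γ (Fml.neg α) (k+1)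

/-- The calculus G3-N. -/
def NCalc : NegRule → Prop := fun r => r = NegRule.n
/-- The calculus G3-NeF. -/
def NeFCalc : NegRule → Prop := fun r => r = NegRule.nef
/-- The calculus G3-CoPC. -/
def CoPCCalc : NegRule → Prop := fun r => r = NegRule.copc
/-- The calculus G3-MPC (contraposition plus (AN)). -/
def MPCCalc : NegRule → Prop := fun r => r = NegRule.copc ∨ r = NegRule.an

/-- Derivability (at some height). -/
def Derivable (R : NegRule → Prop) (Γ : Multiset Fml) (φ : Fml) : Prop := ∃ k, Der R Γ φ k

/-- `iterNeg m φ` is `m` nested applications of `¬` to `φ`. -/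
def iterNeg : Nat → Fml → Fml
  | 0, φ => φ
  | m + 1, φ => Fml.neg (iterNeg m φ)

lemma copc_aux (p : Nat) : ∀ k (Γ : Multiset Fml), Fml.var p ∈ Γ →
    iterNeg (2*k+1) (Fml.var p) ∈ Γ →
    Der CoPCCalc Γ (iterNeg (2*k) (Fml.var p)) (2*k) := by
  intro k
  induction k with
  | zero =>
    intro Γ hp _
    simpa [iterNeg, Multiset.cons_erase hp] using
      Der.ax (R := CoPCCalc) (Γ.erase (Fml.var p)) p 0
  | succ k ih =>
    intro Γ hp hn
    have h3 : iterNeg (2*k+3) (Fml.var p) ∈ Γ := by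
      have : 2*(k+1)+1 = 2*k+3 := by omega
      rwa [this] at hn
    have hΓ : Γ = iterNeg (2*k+3) (Fml.var p) ::ₘ Γ.erase (iterNeg (2*k+3) (Fml.var p)) :=
      (Multiset.cons_erase h3).symm
    set Γ' := Γ.erase (iterNeg (2*k+3) (Fml.var p)) with hΓ'
    have hp' : Fml.var p ∈ Γ' := by
      rw [hΓ] at hp
      rcases Multiset.mem_cons.1 hp with h | h
      · exact absurd h (by simp [iterNeg])
      · exact h
    have goal_eq : 2*(k+1) = 2*k+2 := by omega
    rw [goal_eq, hΓ]
    show Der CoPCCalc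
      (Fml.neg (iterNeg (2*k+2) (Fml.var p)) ::ₘ Γ')
      (Fml.neg (iterNeg (2*k+1) (Fml.var p))) (2*k+1+1)
    refine Der.copc (by rfl) ?_
    show Der CoPCCalc
      (Fml.neg (iterNeg (2*k) (Fml.var p)) ::ₘ
        (Fml.neg (iterNeg (2*k+2) (Fml.var p)) ::ₘ Γ'))
      (Fml.neg (iterNeg (2*k+1) (Fml.var p))) (2*k+1)
    refine Der.copc (by rfl) ?_
    apply ih
    · simp [hp']
    · simp [iterNeg]

/-- In CoPC, `¬^(2n+1) p → ¬p` is a theorem for every `n ≥ 1`. -/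
theorem odd_negations_collapse_CoPC :
    ∀ n : Nat, 1 ≤ n → ∀ p : Nat,
      Derivable CoPCCalc 0
        (Fml.imp (iterNeg (2 * n + 1) (Fml.var p)) (Fml.neg (Fml.var p))) := by
  intro n _ p
  refine ⟨2*n+2, Der.impR ?_⟩
  show Der CoPCCalc (Fml.neg (iterNeg (2*n) (Fml.var p)) ::ₘ 0)
    (Fml.neg (Fml.var p)) (2*n+1)
  refine Der.copc (by rfl) ?_
  apply copc_aux
  · simp
  · simp [iterNeg]
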